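/- arXiv:1903.10319 — 2 statements merged into one kernel-verified Lean document; each statement's English description precedes it below -/
import Mathlib

section
/- For every integer k ≥ 4, the graph (K_3 ∪ \overline{K}_{k-4}) ∨ T(2k-2,2) contains Q(2,k) = K_1 ∨ T(2k,2) as a subgraph. -/
/-! Removing one vertex from each part of `T(r + m, r)` leaves `T(m, r)`, and the removed
vertices form a clique joined to the rest, so `T(r + m, r) ⊆ K_r ∨ T(m, r)`. With `r = 2` this
gives `Q(2,k) ⊆ K₁ ∨ K₂ ∨ T(2k-2,2) = K₃ ∨ T(2k-2,2)`, and `K₃` is a component of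
`K₃ ∪ \overline{K}_{k-4}`. -/

open SimpleGraph

universe u v

/-- `F` embeds into `G` as a subgraph (injective graph homomorphism). -/
def Embeds {α : Type u} {β : Type v} (F : SimpleGraph α) (G : SimpleGraph β) : Prop :=
  ∃ f : α ↪ β, ∀ a b, F.Adj a b → G.Adj (f a) (f b)

/-- Join of two graphs: all cross edges added. -/
def join {α β : Type*} (G : SimpleGraph α) (H : SimpleGraph β) : SimpleGraph (α ⊕ β) where
  Adj x y :=
    match x, y with
    | Sum.inl a, Sum.inl b => G.Adj a b
    | Sum.inr a, Sum.inr b => H.Adj a b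
    | Sum.inl _, Sum.inr _ => True
    | Sum.inr _, Sum.inl _ => True
  symm := by
    constructor
    rintro (a | a) (b | b) h
    · exact G.adj_symm h
    · trivial
    · trivial
    · exact H.adj_symm h
  loopless := by
    constructor
    rintro (a | a) h
    · exact G.irrefl h
    · exact H.irrefl h

/-- Disjoint union of two graphs. -/
def dUnion {α β : Type*} (G : SimpleGraph α) (H : SimpleGraph β) : SimpleGraph (α ⊕ β) where
  Adj x y :=
    match x, y with
    | Sum.inl a, Sum.inl b => G.Adj a b
    | Sum.inr a, Sum.inr b => H.Adj a b
    | Sum.inl _, Sum.inr _ => False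
    | Sum.inr _, Sum.inl _ => False
  symm := by
    constructor
    rintro (a | a) (b | b) h
    · exact G.adj_symm h
    · exact h.elim
    · exact h.elim
    · exact H.adj_symm h
  loopless := by
    constructor
    rintro (a | a) h
    · exact G.irrefl h
    · exact H.irrefl h

/-- The star `S_{k+1}` on `k+1` vertices, with center `0`. -/
def starG (k : ℕ) : SimpleGraph (Fin (k + 1)) :=
  SimpleGraph.fromRel (fun i _ => i = 0)

/-- The matching `M_{2k}` consisting of `k` disjoint edges on `2k` vertices. -/
def matchingG (k : ℕ) : SimpleGraph (Fin (2 * k)) :=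
  SimpleGraph.fromRel (fun i j => (i : ℕ) / 2 = (j : ℕ) / 2)

/-- `Q(p,k) = K₁ ∨ T(pk,p)`. -/
def Q (p k : ℕ) : SimpleGraph (Unit ⊕ Fin (p * k)) :=
  join (⊤ : SimpleGraph Unit) (SimpleGraph.turanGraph (p * k) p)

/-- Number of edges of a graph. -/
noncomputable def eCount {α : Type*} (G : SimpleGraph α) : ℕ := Nat.card G.edgeSet

/-- `t(n,p)`, the number of edges of the Turán graph `T(n,p)`. -/
noncomputable def tur (n p : ℕ) : ℕ := eCount (SimpleGraph.turanGraph n p)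

/-- Degree of a vertex, instance-free. -/
noncomputable def ndeg {α : Type*} (G : SimpleGraph α) (v : α) : ℕ := Nat.card (G.neighborSet v)

/-- An edge-coloring `c` of `K_n` admits a rainbow copy of `F`. -/
def HasRainbow {n : ℕ} {β : Type*} (c : Sym2 (Fin n) → ℕ) (F : SimpleGraph β) : Prop :=
  ∃ f : β ↪ Fin n, ∀ a b a' b', F.Adj a b → F.Adj a' b' →
    c s(f a, f b) = c s(f a', f b') → s(a, b) = s(a', b')

/-- Number of colors used on the edges of `K_n` by the coloring `c`. -/
noncomputable def colorsUsed (n : ℕ) (c : Sym2 (Fin n) → ℕ) : ℕ :=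
  Nat.card (c '' (⊤ : SimpleGraph (Fin n)).edgeSet)

/-- The Turán graph `T(vp,p)` with a matching of `k-1` edges added inside the part `0`
and one extra edge added inside the part `1`. -/
def turanMM (w p k : ℕ) : SimpleGraph (Fin (w * p)) :=
  SimpleGraph.fromRel (fun i j =>
    ((i : ℕ) % p ≠ (j : ℕ) % p)
    ∨ ((i : ℕ) % p = 0 ∧ (j : ℕ) % p = 0 ∧ (i : ℕ) / p / 2 = (j : ℕ) / p / 2 ∧
        (i : ℕ) / p < 2 * (k - 1))
    ∨ ((i : ℕ) % p = 1 ∧ (j : ℕ) % p = 1 ∧ (i : ℕ) / p < 2 ∧ (j : ℕ) / p < 2))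

section Join

variable {α α' β β' γ : Type*} {G : SimpleGraph α} {G' : SimpleGraph α'}
  {H : SimpleGraph β} {H' : SimpleGraph β'} {K : SimpleGraph γ}

lemma embeds_iff_isContained : Embeds G H ↔ G ⊑ H :=
  ⟨fun ⟨f, hf⟩ => ⟨⟨⟨f, hf _ _⟩, f.injective⟩⟩,
    fun ⟨f⟩ => ⟨f.toEmbedding, fun _ _ => f.toHom.map_adj⟩⟩

lemma SimpleGraph.IsContained.join (hG : G ⊑ G') (hH : H ⊑ H') : join G H ⊑ join G' H' := by
  obtain ⟨f⟩ := hG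
  obtain ⟨g⟩ := hH
  refine ⟨⟨⟨Sum.map f g, fun {x y} hxy => ?_⟩, f.injective.sumMap g.injective⟩⟩
  rcases x with a | a <;> rcases y with b | b
  exacts [f.toHom.map_adj hxy, trivial, trivial, g.toHom.map_adj hxy]

def joinAssoc : join G (join H K) ≃g join (join G H) K where
  toEquiv := (Equiv.sumAssoc α β γ).symm
  map_rel_iff' := by rintro (a | a | a) (b | b | b) <;> exact Iff.rfl

lemma join_top_top : join (⊤ : SimpleGraph α) (⊤ : SimpleGraph β) = ⊤ := by
  ext (a | a) (b | b) <;> simp [join]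

lemma isContained_dUnion_left : G ⊑ dUnion G H :=
  ⟨⟨⟨Sum.inl, fun h => h⟩, Sum.inl_injective⟩⟩

end Join

lemma turanGraph_isContained_join_top (r m : ℕ) :
    turanGraph (r + m) r ⊑ join (⊤ : SimpleGraph (Fin r)) (turanGraph m r) := by
  refine ⟨⟨⟨finSumFinEquiv.symm, fun {v w} hvw => ?_⟩, finSumFinEquiv.symm.injective⟩⟩
  obtain ⟨x, rfl⟩ := finSumFinEquiv.surjective v
  obtain ⟨y, rfl⟩ := finSumFinEquiv.surjective w
  rcases x with x | x <;> rcases y with y | y <;>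
    simp_all [turanGraph_adj, join, Nat.add_mod_left]
  rintro rfl
  exact hvw rfl

theorem stmt1 (k : ℕ) (hk : 4 ≤ k) :
    Embeds (Q 2 k)
      (join (dUnion (⊤ : SimpleGraph (Fin 3)) (⊥ : SimpleGraph (Fin (k - 4))))
        (SimpleGraph.turanGraph (2 * k - 2) 2)) := by
  obtain ⟨n, hn⟩ : ∃ n, 2 * k = 2 + n := ⟨2 * k - 2, by omega⟩
  rw [embeds_iff_isContained, Q, hn, Nat.add_sub_cancel_left]
  have hTriangle : (⊤ : SimpleGraph (Unit ⊕ Fin 2)) ⊑ dUnion (⊤ : SimpleGraph (Fin 3))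
      (⊥ : SimpleGraph (Fin (k - 4))) :=
    (isContained_top_iff.2 ⟨(Fintype.equivFinOfCardEq rfl).toEmbedding⟩).trans
      isContained_dUnion_left
  calc join ⊤ (turanGraph (2 + n) 2)
      ⊑ join ⊤ (join ⊤ (turanGraph n 2)) :=
        IsContained.rfl.join (turanGraph_isContained_join_top 2 n)
    _ ⊑ join (join ⊤ ⊤) (turanGraph n 2) := joinAssoc.isContained
    _ ⊑ _ := by rw [join_top_top]; exact hTriangle.join IsContained.rfl
end

section
/- For k ≥ 2, consider the graph G on n vertices obtained from the Turán graph T(n,p) by embedding into each partite class a triangle-free graph that is (k−1)-regular or nearly (k−1)-regular (all degrees k−1 except one vertex of degree k−2). Then G contains no copy of Q(p,k+1) = K_1 ∨ T(p(k+1), p). -/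
open SimpleGraph

universe u v

/-
Let `x` be the centre of a copy of `Q(p,k+1)` and say that a colour class of `T(p(k+1),p)` meets a
part of `T(n,p)` if one of its vertices is mapped there. Vertices of different classes lying in the
same part must be joined by `H`-edges, so since `H` is triangle-free a part meets at most two
classes, and the part of `x` at most one. Since `H` has maximum degree below `k+1`, no vertex is
`H`-adjacent to a whole class; hence a class mapped into a single part `F` is the only class meeting
`F`, and `F` is not the part of `x`. Weighting each incidence by `2` if its class meets only one
part and by `1` otherwise, every class carries weight at least `2` and every part at most `2`, the
part of `x` at most `1`: this gives `2p ≤ 2p - 1`.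
-/

open Finset

theorem card_lt_card_of_rel {α β : Type*} [Fintype α] [Fintype β] (r : α → β → Prop) (b₀ : β)
    (h_meets : ∀ a, ∃ b, r a b)
    (h_three : ∀ b a₁ a₂ a₃, r a₁ b → r a₂ b → r a₃ b → a₁ = a₂ ∨ a₁ = a₃ ∨ a₂ = a₃)
    (h_b₀ : ∀ a₁ a₂, r a₁ b₀ → r a₂ b₀ → a₁ = a₂)
    (h_private : ∀ a b, r a b → (∀ b', r a b' → b' = b) → b ≠ b₀ ∧ ∀ a', r a' b → a' = a) :
    Fintype.card α < Fintype.card β := by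
  classical
  set w : α → ℕ := fun a => if #{b | r a b} = 1 then 2 else 1
  have h_row : ∀ a, 2 ≤ ∑ b, if r a b then w a else 0 := by
    intro a
    obtain ⟨b, hb⟩ := h_meets a
    have : 0 < #{b | r a b} := card_pos.2 ⟨b, by simpa using hb⟩
    rw [← sum_filter, sum_const, smul_eq_mul]
    simp only [w]
    split_ifs with h <;> omega
  have h_col : ∀ b, (∑ a, if r a b then w a else 0) + (if b = b₀ then 1 else 0) ≤ 2 := by
    intro b
    by_cases h : ∃ a, r a b ∧ #{b | r a b} = 1
    · obtain ⟨a, hab, ha⟩ := h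
      have h_uniq : ∀ b', r a b' → b' = b := fun b' hb' =>
        card_le_one.1 ha.le b' (by simpa using hb') b (by simpa using hab)
      obtain ⟨hb₀, h_own⟩ := h_private a b hab h_uniq
      rw [sum_eq_single a (fun a' _ ha' => if_neg fun h => ha' (h_own a' h)) (by simp)]
      simp [hab, w, ha, hb₀]
    · push Not at h
      have h_one : ∀ a, r a b → w a = 1 := fun a hab => if_neg (h a hab)
      rw [← sum_filter, sum_congr rfl fun a ha => h_one a (mem_filter.1 ha).2, ← card_eq_sum_ones]
      have h₂ : #{a | r a b} ≤ 2 := by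
        by_contra! h₃
        obtain ⟨a₁, a₂, a₃, h₁, h₂, h₃, h₁₂, h₁₃, h₂₃⟩ := two_lt_card_iff.1 h₃
        simp only [mem_filter, mem_univ, true_and] at h₁ h₂ h₃
        rcases h_three b a₁ a₂ a₃ h₁ h₂ h₃ with h | h | h <;> contradiction
      split_ifs with hb
      · subst hb
        have : #{a | r a b} ≤ 1 := card_le_one.2 fun a₁ h₁ a₂ h₂ =>
          h_b₀ a₁ a₂ (by simpa using h₁) (by simpa using h₂)
        omega
      · omega
  suffices 2 * Fintype.card α + 1 ≤ 2 * Fintype.card β by omega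
  calc 2 * Fintype.card α + 1 = ∑ _a : α, 2 + 1 := by simp [mul_comm]
    _ ≤ (∑ a, ∑ b, if r a b then w a else 0) + 1 := by gcongr with a; exact h_row a
    _ = ∑ b, ((∑ a, if r a b then w a else 0) + if b = b₀ then 1 else 0) := by
      rw [sum_comm, sum_add_distrib, sum_ite_eq']; simp
    _ ≤ ∑ _b : β, 2 := sum_le_sum fun b _ => h_col b
    _ = 2 * Fintype.card β := by simp [mul_comm]

section

variable {V W : Type*} {H : SimpleGraph V}

lemma card_le_ndeg_of_forall_adj [Finite V] {y : W → V} (hy : Function.Injective y) {z : V}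
    (h : ∀ w, H.Adj z (y w)) : Nat.card W ≤ ndeg H z :=
  Nat.card_le_card_of_injective (fun w => (⟨y w, h w⟩ : H.neighborSet z))
    fun _ _ hw => hy (congrArg Subtype.val hw)

theorem not_embeds_join_comap_sup {κ ι : Type*} [Finite V] [Fintype κ] [Fintype ι]
    (part : V → ι) (cls : W → κ) (m : ℕ)
    (htf : H.CliqueFree 3)
    (hdeg : ∀ v, ndeg H v < m) (hcls : ∀ C, m ≤ Nat.card {w // cls w = C})
    (hcard : Fintype.card ι ≤ Fintype.card κ) :
    ¬ Embeds (join (⊤ : SimpleGraph Unit) ((⊤ : SimpleGraph κ).comap cls))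
      ((⊤ : SimpleGraph ι).comap part ⊔ H) := by
  classical
  rintro ⟨f, hf⟩
  set x := f (.inl ())
  set y : W → V := fun w => f (.inr w)
  have hy : Function.Injective y := fun _ _ h => Sum.inr_injective (f.injective h)
  have hxH : ∀ w, part (y w) = part x → H.Adj x (y w) := fun w h =>
    (hf (.inl ()) (.inr w) trivial).resolve_left fun hne => hne h.symm
  have hyH : ∀ w w', cls w ≠ cls w' → part (y w) = part (y w') → H.Adj (y w) (y w') :=
    fun w w' hcls h => (hf (.inr w) (.inr w') hcls).resolve_left fun hne => hne h
  have h_undominated : ∀ C z, ¬ ∀ w, cls w = C → H.Adj z (y w) := fun C z h =>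
    ((hcls C).trans (card_le_ndeg_of_forall_adj (hy.comp Subtype.val_injective)
      fun w => h w w.2)).not_gt (hdeg z)
  refine (card_lt_card_of_rel (fun C F => ∃ w, cls w = C ∧ part (y w) = F) (part x)
    ?_ ?_ ?_ ?_).not_ge hcard
  · intro C
    have : 0 < Nat.card {w // cls w = C} := by have := hdeg x; have := hcls C; omega
    obtain ⟨⟨w, rfl⟩⟩ := (Nat.card_pos_iff.1 this).1
    exact ⟨_, w, rfl, rfl⟩
  · rintro F _ _ _ ⟨w₁, rfl, h₁⟩ ⟨w₂, rfl, h₂⟩ ⟨w₃, rfl, h₃⟩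
    by_contra! hne
    exact htf _ (is3Clique_triple_iff.2 ⟨hyH _ _ hne.1 (h₁.trans h₂.symm),
      hyH _ _ hne.2.1 (h₁.trans h₃.symm), hyH _ _ hne.2.2 (h₂.trans h₃.symm)⟩)
  · rintro _ _ ⟨w₁, rfl, h₁⟩ ⟨w₂, rfl, h₂⟩
    by_contra hne
    exact htf _ (is3Clique_triple_iff.2 ⟨hxH _ h₁, hxH _ h₂, hyH _ _ hne (h₁.trans h₂.symm)⟩)
  · rintro C F - hF
    have hCF : ∀ w, cls w = C → part (y w) = F := fun w hw => hF _ ⟨w, hw, rfl⟩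
    refine ⟨fun hFx => h_undominated C x fun w hw => hxH w ((hCF w hw).trans hFx), ?_⟩
    rintro _ ⟨w', rfl, hw'⟩
    by_contra hne
    exact h_undominated C (y w') fun w hw =>
      hyH w' w (hw ▸ hne) (hw'.trans (hCF w hw).symm)

end

lemma turanGraph_eq_comap {n p : ℕ} (hp : 0 < p) :
    turanGraph n p = (⊤ : SimpleGraph (Fin p)).comap fun v : Fin n => ⟨v % p, Nat.mod_lt _ hp⟩ := by
  ext
  simp [turanGraph_adj, Fin.ext_iff]

lemma le_card_residue_class {p m : ℕ} (hp : 0 < p) (C : Fin p) :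
    m ≤ Nat.card {u : Fin (p * m) // (⟨u % p, Nat.mod_lt _ hp⟩ : Fin p) = C} := by
  let g : Fin m → {u : Fin (p * m) // (⟨u % p, Nat.mod_lt _ hp⟩ : Fin p) = C} := fun t =>
    ⟨⟨C + p * t, by nlinarith [C.isLt, t.isLt]⟩, by simp [Nat.mod_eq_of_lt C.isLt]⟩
  have hg : Function.Injective g := fun t t' h => by
    simp only [g, Subtype.mk.injEq, Fin.mk.injEq, Nat.add_left_cancel_iff] at h
    exact Fin.ext (Nat.eq_of_mul_eq_mul_left hp h)
  simpa using Nat.card_le_card_of_injective g hg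

theorem stmt4_general (n p k : ℕ) (hp : 0 < p) (H : SimpleGraph (Fin n))
    (htf : H.CliqueFree 3)
    (hreg : ∀ i : ℕ, i < p →
      (∀ v : Fin n, (v : ℕ) % p = i → ndeg H v = k - 1) ∨
      (∃ w : Fin n, (w : ℕ) % p = i ∧ ndeg H w = k - 2 ∧
        ∀ v : Fin n, (v : ℕ) % p = i → v ≠ w → ndeg H v = k - 1)) :
    ¬ Embeds (Q p (k + 1)) (SimpleGraph.turanGraph n p ⊔ H) := by
  have hdeg : ∀ v, ndeg H v < k + 1 := by
    intro v
    rcases hreg _ (Nat.mod_lt v hp) with hall | ⟨w, -, hw, hrest⟩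
    · rw [hall v rfl]; omega
    · by_cases hvw : v = w
      · rw [hvw, hw]; omega
      · rw [hrest v rfl hvw]; omega
  rw [Q, turanGraph_eq_comap hp, turanGraph_eq_comap hp]
  exact not_embeds_join_comap_sup _ _ (k + 1) htf hdeg (le_card_residue_class hp) (by simp)

theorem stmt4 (n p k : ℕ) (hp : 0 < p) (hk : 2 ≤ k) (H : SimpleGraph (Fin n))
    (hpart : ∀ u v : Fin n, H.Adj u v → (u : ℕ) % p = (v : ℕ) % p)
    (htf : H.CliqueFree 3)
    (hreg : ∀ i : ℕ, i < p →
      (∀ v : Fin n, (v : ℕ) % p = i → ndeg H v = k - 1) ∨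
      (∃ w : Fin n, (w : ℕ) % p = i ∧ ndeg H w = k - 2 ∧
        ∀ v : Fin n, (v : ℕ) % p = i → v ≠ w → ndeg H v = k - 1)) :
    ¬ Embeds (Q p (k + 1)) (SimpleGraph.turanGraph n p ⊔ H) :=
  stmt4_general n p k hp H htf hreg
end
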